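/- arXiv:2306.02350 — 2 statements merged into one kernel-verified Lean document; each statement's English description precedes it below -/
import Mathlib

section
/- Let k and m be nonnegative integers with k < m. Then the improper integral lim_{R→∞} ∫_0^R y^k e^{i y^{m+1}} dy exists and equals (1/(m+1)) · Γ((k+1)/(m+1)) · e^{iπ(k+1)/(2(m+1))}, where Γ is the Gamma function. -/
/-!
Write `n = m + 1` and `θ = π / (2n)`. The integrand `z ^ k * exp (i z ^ n)` is entire, hence has a
primitive, so its integral along `[0, R]` equals its integral along the ray `t e^{iθ}`, `0 ≤ t ≤ R`,
minus its integral along the arc `R e^{iφ}`, `0 ≤ φ ≤ θ`. Since `(e^{iθ})^n = i`, on the ray the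
integrand becomes `e^{i(k+1)θ} t^k e^{-t^n}`, whose integral over `(0, ∞)` is `Γ((k+1)/n) / n`.
On the arc its modulus is `R^(k+1) e^{-R^n sin(nφ)}`, and Jordan's inequality `sin x ≥ 2x/π`
bounds the arc integral by `π R^(k+1) / (2n R^n)`, which tends to `0` because `k + 1 < n`.
-/

open MeasureTheory Filter Topology intervalIntegral
open Complex Set
open scoped Real

section Primitive

variable {E : Type*} [NormedAddCommGroup E] [NormedSpace ℂ E] [CompleteSpace E]

theorem integral_deriv_smul_comp_eq_sub {f F : ℂ → E} (hF : ∀ z, HasDerivAt F (f z) z)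
    (hf : Continuous f) {γ γ' : ℝ → ℂ} (hγ : ∀ t, HasDerivAt γ (γ' t) t) (hγ' : Continuous γ')
    (a b : ℝ) : ∫ t in a..b, γ' t • f (γ t) = F (γ b) - F (γ a) := by
  have hγc : Continuous γ := continuous_iff_continuousAt.2 fun t => (hγ t).continuousAt
  exact integral_eq_sub_of_hasDerivAt (fun t _ => (hF (γ t)).scomp t (hγ t))
    ((hγ'.smul (hf.comp hγc)).intervalIntegrable a b)

theorem Differentiable.integral_eq_integral_ray_sub_integral_arc {f : ℂ → E}
    (hf : Differentiable ℂ f) (R θ : ℝ) :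
    ∫ t in (0:ℝ)..R, f t =
      (∫ t in (0:ℝ)..R, cexp (θ * I) • f (t * cexp (θ * I))) -
        ∫ φ in (0:ℝ)..θ, (I * R * cexp (φ * I)) • f (R * cexp (φ * I)) := by
  obtain ⟨F, hF⟩ := hf.isExactOn_univ
  have hF' : ∀ z, HasDerivAt F (f z) z := fun z => hF z (mem_univ z)
  have real_axis := integral_deriv_smul_comp_eq_sub hF' hf.continuous (γ := ((↑) : ℝ → ℂ))
    (fun t => (hasDerivAt_id t).ofReal_comp) continuous_const 0 R
  have ray := integral_deriv_smul_comp_eq_sub hF' hf.continuous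
    (γ := fun t : ℝ => (t : ℂ) * cexp (θ * I))
    (fun t => (hasDerivAt_id t).ofReal_comp.mul_const _ |>.congr_deriv (one_mul _))
    continuous_const 0 R
  have arc := integral_deriv_smul_comp_eq_sub hF' hf.continuous
    (γ := fun φ : ℝ => (R : ℂ) * cexp (φ * I)) (γ' := fun φ => I * R * cexp (φ * I))
    (fun φ => ((hasDerivAt_id φ).ofReal_comp.mul_const I).cexp.const_mul (R : ℂ)
      |>.congr_deriv (by simp only [id, ofReal_one, one_mul]; ring))
    (by fun_prop) 0 θ
  simp only [ofReal_one, one_smul, ofReal_zero, zero_mul, exp_zero, mul_one] at real_axis ray arc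
  rw [real_axis, ray, arc]
  abel

end Primitive

theorem integral_exp_neg_mul_sin_le {A c : ℝ} (hA : 0 < A) (hc : 0 < c) :
    ∫ φ in (0:ℝ)..π / (2 * c), Real.exp (-(A * Real.sin (c * φ))) ≤ π / (2 * c * A) := by
  set b := 2 / π * c * A
  have hb : 0 < b := by positivity
  have hT : 0 ≤ π / (2 * c) := by positivity
  calc ∫ φ in (0:ℝ)..π / (2 * c), Real.exp (-(A * Real.sin (c * φ)))
      ≤ ∫ φ in (0:ℝ)..π / (2 * c), Real.exp (-b * φ) := by
        refine integral_mono_on hT (by apply Continuous.intervalIntegrable; fun_prop)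
          (by apply Continuous.intervalIntegrable; fun_prop) fun φ ⟨hφ₀, hφ⟩ => ?_
        have hcφ : c * φ ≤ π / 2 := by
          rw [le_div_iff₀ (by positivity)] at hφ
          linarith
        have := Real.mul_le_sin (by positivity) hcφ
        gcongr
        nlinarith
    _ ≤ ∫ φ in Ioi 0, Real.exp (-b * φ) := by
        rw [intervalIntegral.integral_of_le hT]
        exact setIntegral_mono_set (integrableOn_exp_mul_Ioi (neg_lt_zero.2 hb) 0)
          (.of_forall fun _ => (Real.exp_pos _).le) Ioc_subset_Ioi_self.eventuallyLE
    _ = π / (2 * c * A) := by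
        rw [integral_exp_mul_Ioi (neg_lt_zero.2 hb), mul_zero, Real.exp_zero]
        simp only [b]
        field_simp

theorem tendsto_integral_rpow_mul_exp_neg_rpow {p q : ℝ} (hp : 0 < p) (hq : -1 < q) :
    Tendsto (fun R : ℝ => ∫ x in (0:ℝ)..R, x ^ q * Real.exp (-x ^ p)) atTop
      (𝓝 (1 / p * Real.Gamma ((q + 1) / p))) := by
  rw [← integral_rpow_mul_exp_neg_rpow hp hq]
  exact intervalIntegral_tendsto_integral_Ioi 0 (integrableOn_rpow_mul_exp_neg_rpow hq hp)
    tendsto_id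

theorem exp_pi_div_two_div_nat_mul_I_pow_self {n : ℕ} (hn : n ≠ 0) :
    cexp (((π / (2 * n) : ℝ) : ℂ) * I) ^ n = I := by
  rw [← exp_nat_mul]
  convert exp_pi_div_two_mul_I using 2
  push_cast
  field_simp

noncomputable def fresnelIntegrand (k n : ℕ) (z : ℂ) : ℂ := z ^ k * cexp (I * z ^ n)

theorem differentiable_fresnelIntegrand (k n : ℕ) : Differentiable ℂ (fresnelIntegrand k n) := by
  unfold fresnelIntegrand
  fun_prop

theorem exp_mul_fresnelIntegrand_ray {n : ℕ} (hn : n ≠ 0) (k : ℕ) (t : ℝ) :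
    cexp (((π / (2 * n) : ℝ) : ℂ) * I) *
        fresnelIntegrand k n (t * cexp (((π / (2 * n) : ℝ) : ℂ) * I)) =
      cexp (I * π * (k + 1) / (2 * n)) * ((t ^ k * Real.exp (-t ^ n) : ℝ) : ℂ) := by
  have hrot : cexp (I * π * (k + 1) / (2 * n)) =
      cexp (((π / (2 * n) : ℝ) : ℂ) * I) ^ (k + 1) := by
    rw [← exp_nat_mul]
    congr 1
    push_cast
    ring
  have hray : I * ((t : ℂ) * cexp (((π / (2 * n) : ℝ) : ℂ) * I)) ^ n = -(t : ℂ) ^ n := by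
    rw [mul_pow, exp_pi_div_two_div_nat_mul_I_pow_self hn]
    linear_combination (t : ℂ) ^ n * I_mul_I
  rw [fresnelIntegrand, hrot, hray]
  push_cast
  ring

theorem norm_fresnelIntegrand_arc {R : ℝ} (hR : 0 ≤ R) (k n : ℕ) (φ : ℝ) :
    ‖I * R * cexp (φ * I) * fresnelIntegrand k n (R * cexp (φ * I))‖ =
      R ^ (k + 1) * Real.exp (-(R ^ n * Real.sin (n * φ))) := by
  have hpow : ((R : ℂ) * cexp (φ * I)) ^ n = ((R ^ n : ℝ) : ℂ) * cexp (((n * φ : ℝ) : ℂ) * I) := by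
    rw [mul_pow, ← exp_nat_mul]
    push_cast
    ring_nf
  have hre : (I * (((R ^ n : ℝ) : ℂ) * cexp (((n * φ : ℝ) : ℂ) * I))).re =
      -(R ^ n * Real.sin (n * φ)) := by
    simp only [mul_re, mul_im, I_re, I_im, ofReal_re, ofReal_im, exp_ofReal_mul_I_re,
      exp_ofReal_mul_I_im]
    ring
  rw [fresnelIntegrand, hpow, norm_mul, norm_mul, norm_mul, norm_mul, norm_pow, norm_mul,
    norm_exp_ofReal_mul_I, norm_exp, hre, norm_I, norm_real, Real.norm_eq_abs, abs_of_nonneg hR]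
  ring

theorem tendsto_integral_fresnelIntegrand_ray {n : ℕ} (hn : n ≠ 0) (k : ℕ) :
    Tendsto (fun R : ℝ => ∫ t in (0:ℝ)..R, cexp (((π / (2 * n) : ℝ) : ℂ) * I) *
        fresnelIntegrand k n (t * cexp (((π / (2 * n) : ℝ) : ℂ) * I))) atTop
      (𝓝 (cexp (I * π * (k + 1) / (2 * n)) * ((1 / n * Real.Gamma ((k + 1) / n) : ℝ) : ℂ))) := by
  have hreal := tendsto_integral_rpow_mul_exp_neg_rpow (p := n) (q := k) (by positivity)
    (by linarith [k.cast_nonneg (α := ℝ)])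
  simp only [Real.rpow_natCast] at hreal
  simp_rw [exp_mul_fresnelIntegrand_ray hn, intervalIntegral.integral_const_mul,
    intervalIntegral.integral_ofReal]
  exact ((continuous_ofReal.tendsto _).comp hreal).const_mul _

theorem tendsto_integral_fresnelIntegrand_arc {k n : ℕ} (hkn : k + 1 < n) :
    Tendsto (fun R : ℝ => ∫ φ in (0:ℝ)..π / (2 * n),
      I * R * cexp (φ * I) * fresnelIntegrand k n (R * cexp (φ * I))) atTop (𝓝 0) := by
  have hn : (0:ℝ) < n := Nat.cast_pos.2 (by omega)
  refine squeeze_zero_norm' ?_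
    (by simpa using (tendsto_pow_div_pow_atTop_zero (𝕜 := ℝ) hkn).const_mul (π / (2 * n)))
  filter_upwards [eventually_gt_atTop 0] with R hR
  calc _ ≤ ∫ φ in (0:ℝ)..π / (2 * n),
        ‖I * R * cexp (φ * I) * fresnelIntegrand k n (R * cexp (φ * I))‖ :=
        intervalIntegral.norm_integral_le_integral_norm (by positivity)
    _ = R ^ (k + 1) * ∫ φ in (0:ℝ)..π / (2 * n), Real.exp (-(R ^ n * Real.sin (n * φ))) := by
        simp_rw [norm_fresnelIntegrand_arc hR.le, intervalIntegral.integral_const_mul]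
    _ ≤ R ^ (k + 1) * (π / (2 * n * R ^ n)) := by
        gcongr
        exact integral_exp_neg_mul_sin_le (by positivity) hn
    _ = π / (2 * n) * (R ^ (k + 1) / R ^ n) := by
        field_simp

/-- For nonnegative integers `k < m`, the improper (oscillatory) integral
`∫_0^∞ y^k e^{i y^{m+1}} dy`, understood as the limit of `∫_0^R` as `R → ∞`,
exists and equals `(1/(m+1)) Γ((k+1)/(m+1)) e^{iπ(k+1)/(2(m+1))}`. -/
theorem improper_power_fresnel (k m : ℕ) (hkm : k < m) :
    Filter.Tendsto
      (fun R : ℝ => ∫ y in (0:ℝ)..R, (y : ℂ) ^ k * Complex.exp (Complex.I * (y : ℂ) ^ (m + 1)))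
      Filter.atTop
      (𝓝 ((1 / ((m : ℂ) + 1)) * (Real.Gamma (((k : ℝ) + 1) / ((m : ℝ) + 1)) : ℂ) *
        Complex.exp (Complex.I * (Real.pi : ℂ) * ((k : ℂ) + 1) / (2 * ((m : ℂ) + 1))))) := by
  have key := (tendsto_integral_fresnelIntegrand_ray (n := m + 1) (by omega) k).sub
    (tendsto_integral_fresnelIntegrand_arc (k := k) (n := m + 1) (by omega))
  convert key using 2 with R
  · have hrot := (differentiable_fresnelIntegrand k (m + 1))
      |>.integral_eq_integral_ray_sub_integral_arc R (π / (2 * (m + 1 : ℕ)))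
    simp only [smul_eq_mul] at hrot
    exact hrot
  · push_cast
    ring
end

section
/- Let I be an open interval of ℝ containing 0, let m be a nonnegative integer, and let φ ∈ C^∞(I,ℝ) satisfy φ'(y) = y^m φ₁(y) with φ₁ smooth and φ₁(0) ≠ 0. Then there exist an open neighborhood J ⊆ I of 0 and a smooth function ψ : J → ℝ such that ψ(0) = 0, ψ'(0) = (|φ₁(0)|/(m+1))^{1/(m+1)} > 0 (so ψ is a smooth diffeomorphism from a neighborhood of 0 onto its image), and φ(y) = φ(0) + sgn(φ₁(0)) · ψ(y)^{m+1} for all y ∈ J. -/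
open Set Filter Topology

lemma aux_param_hasDerivAt {c d : ℝ} (h0 : (0:ℝ) ∈ Set.Ioo c d) (k : ℕ) (h : ℝ → ℝ)
    (hh : ContDiffOn ℝ 1 h (Set.Ioo c d)) {y : ℝ} (hy : y ∈ Set.Ioo c d) :
    HasDerivAt (fun x => ∫ t in (0:ℝ)..1, t ^ k * h (t * x))
      (∫ t in (0:ℝ)..1, t ^ (k+1) * deriv h (t * y)) y := by
  obtain ⟨hc0, h0d⟩ := h0
  obtain ⟨hcy, hyd⟩ := hy
  set ε : ℝ := min (y - c) (d - y) / 2 with hε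
  have ε_pos : 0 < ε := by rw [hε]; apply half_pos; apply lt_min <;> linarith
  have hε1 : ε ≤ (y - c) / 2 := by rw [hε]; linarith [min_le_left (y - c) (d - y)]
  have hε2 : ε ≤ (d - y) / 2 := by rw [hε]; linarith [min_le_right (y - c) (d - y)]
  set a' := min 0 (y - ε) with ha'
  set b' := max 0 (y + ε) with hb'
  have hK : Set.Icc a' b' ⊆ Set.Ioo c d := by
    intro z hz
    obtain ⟨hz1, hz2⟩ := hz
    have h1 : c < a' := lt_min hc0 (by linarith)
    have h2 : b' < d := max_lt h0d (by linarith)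
    exact ⟨by linarith, by linarith⟩
  have hmem : ∀ t ∈ Set.Icc (0:ℝ) 1, ∀ x ∈ Metric.ball y ε, t * x ∈ Set.Icc a' b' := by
    intro t ht x hx
    obtain ⟨ht0, ht1⟩ := ht
    rw [Metric.mem_ball, Real.dist_eq, abs_lt] at hx
    constructor
    · rcases le_total 0 x with hx0 | hx0
      · exact le_trans (min_le_left _ _) (mul_nonneg ht0 hx0)
      · have : x ≤ t * x := by nlinarith
        exact le_trans (min_le_right _ _) (by linarith)
    · rcases le_total 0 x with hx0 | hx0
      · have : t * x ≤ x := by nlinarith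
        exact le_trans (by linarith) (le_max_right _ _)
      · have : t * x ≤ 0 := by nlinarith
        exact le_trans this (le_max_left _ _)
  have hyb : y ∈ Metric.ball y ε := Metric.mem_ball_self ε_pos
  have hhc : ContinuousOn h (Set.Ioo c d) := hh.continuousOn
  have hdc : ContinuousOn (deriv h) (Set.Ioo c d) :=
    hh.continuousOn_deriv_of_isOpen isOpen_Ioo le_rfl
  have hhd : ∀ z ∈ Set.Ioo c d, HasDerivAt h (deriv h z) z := fun z hz =>
    ((hh.differentiableOn one_ne_zero z hz).differentiableAt (isOpen_Ioo.mem_nhds hz)).hasDerivAt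
  obtain ⟨M, hM⟩ := (isCompact_Icc (a := a') (b := b')).exists_bound_of_continuousOn
    (hdc.mono hK)
  have hIoc : Set.uIoc (0:ℝ) 1 = Set.Ioc 0 1 := Set.uIoc_of_le zero_le_one
  have hIcc : Set.uIcc (0:ℝ) 1 = Set.Icc 0 1 := Set.uIcc_of_le zero_le_one
  have hFc : ∀ (j : ℕ) (u : ℝ → ℝ), ContinuousOn u (Set.Ioo c d) → ∀ x ∈ Metric.ball y ε,
      ContinuousOn (fun t => t ^ j * u (t * x)) (Set.Icc 0 1) := by
    intro j u hu x hx t ht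
    have hz := hK (hmem t ht x hx)
    have hc : ContinuousAt u (t * x) := hu.continuousAt (isOpen_Ioo.mem_nhds hz)
    have hl : ContinuousAt (fun s : ℝ => s * x) t := continuousAt_id.mul continuousAt_const
    exact ((continuousAt_id.pow j).mul (ContinuousAt.comp (g := u) (f := fun s : ℝ => s * x) hc hl)).continuousWithinAt
  have hmeas : ∀ (j : ℕ) (u : ℝ → ℝ), ContinuousOn u (Set.Ioo c d) → ∀ x ∈ Metric.ball y ε,
      MeasureTheory.AEStronglyMeasurable (fun t => t ^ j * u (t * x))
        (MeasureTheory.volume.restrict (Set.uIoc (0:ℝ) 1)) := by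
    intro j u hu x hx
    rw [hIoc]
    exact ((hFc j u hu x hx).mono Set.Ioc_subset_Icc_self).aestronglyMeasurable measurableSet_Ioc
  have res := intervalIntegral.hasDerivAt_integral_of_dominated_loc_of_deriv_le
    (F := fun x t => t ^ k * h (t * x)) (F' := fun x t => t ^ (k+1) * deriv h (t * x))
    (bound := fun _ => M) (a := 0) (b := 1) (μ := MeasureTheory.volume)
    (Metric.ball_mem_nhds y ε_pos)
    (Filter.eventually_of_mem (Metric.ball_mem_nhds y ε_pos) (hmeas k h hhc))
    ((hFc k h hhc y hyb).intervalIntegrable_of_Icc zero_le_one)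
    (hmeas (k+1) (deriv h) hdc y hyb)
    (Filter.Eventually.of_forall (fun t ht x hx => by
      rw [hIoc] at ht
      have ht' := Set.Ioc_subset_Icc_self ht
      have h2 := hM _ (hmem t ht' x hx)
      simp only [Real.norm_eq_abs] at h2 ⊢
      rw [abs_mul, abs_pow, abs_of_nonneg ht'.1]
      have h1 : t ^ (k+1) ≤ 1 := pow_le_one₀ ht'.1 ht'.2
      calc t ^ (k+1) * |deriv h (t * x)| ≤ 1 * M :=
            mul_le_mul h1 h2 (abs_nonneg _) zero_le_one
        _ = M := one_mul M))
    intervalIntegrable_const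
    (Filter.Eventually.of_forall (fun t ht x hx => by
      rw [hIoc] at ht
      have ht' := Set.Ioc_subset_Icc_self ht
      have hz := hK (hmem t ht' x hx)
      have hl : HasDerivAt (fun s : ℝ => t * s) t x := by
        simpa using (hasDerivAt_id x).const_mul t
      exact (((hhd _ hz).comp x hl).const_mul (t ^ k)).congr_deriv
        (by show t ^ k * (deriv h (t * x) * t) = t ^ (k+1) * deriv h (t * x); ring)))
  exact res.2

lemma aux_param_contDiffOn {c d : ℝ} (h0 : (0:ℝ) ∈ Set.Ioo c d) (n : ℕ) :
    ∀ (k : ℕ) (h : ℝ → ℝ), ContDiffOn ℝ (⊤ : ℕ∞) h (Set.Ioo c d) →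
      ContDiffOn ℝ n (fun x => ∫ t in (0:ℝ)..1, t ^ k * h (t * x)) (Set.Ioo c d) := by
  have h1 : ∀ h : ℝ → ℝ, ContDiffOn ℝ (⊤ : ℕ∞) h (Set.Ioo c d) → ContDiffOn ℝ 1 h (Set.Ioo c d) :=
    fun h hh => hh.of_le (by exact_mod_cast le_top)
  induction n with
  | zero =>
    intro k h hh
    rw [Nat.cast_zero, contDiffOn_zero]
    intro y hy
    exact (aux_param_hasDerivAt h0 k h (h1 h hh) hy).continuousAt.continuousWithinAt
  | succ n ih =>
    intro k h hh
    rw [Nat.cast_succ, contDiffOn_succ_iff_deriv_of_isOpen isOpen_Ioo]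
    refine ⟨fun y hy => (aux_param_hasDerivAt h0 k h (h1 h hh) hy).differentiableAt.differentiableWithinAt,
      fun hω => absurd hω (by simp), ?_⟩
    have hd : ContDiffOn ℝ (⊤ : ℕ∞) (deriv h) (Set.Ioo c d) :=
      hh.deriv_of_isOpen isOpen_Ioo (by exact_mod_cast le_rfl)
    refine (ih (k+1) (deriv h) hd).congr ?_
    intro y hy
    exact (aux_param_hasDerivAt h0 k h (h1 h hh) hy).deriv

lemma aux_factor {c d : ℝ} (h0 : (0:ℝ) ∈ Set.Ioo c d) (m : ℕ) (φ φ₁ : ℝ → ℝ)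
    (hφ : ContDiffOn ℝ 1 φ (Set.Ioo c d)) (hφ₁ : ContinuousOn φ₁ (Set.Ioo c d))
    (hder : ∀ y ∈ Set.Ioo c d, deriv φ y = y ^ m * φ₁ y) {y : ℝ} (hy : y ∈ Set.Ioo c d) :
    φ y - φ 0 = y ^ (m+1) * ∫ t in (0:ℝ)..1, t ^ m * φ₁ (t * y) := by
  have hsub : Set.uIcc 0 y ⊆ Set.Ioo c d := Set.ordConnected_Ioo.uIcc_subset h0 hy
  have hint : ∫ s in (0:ℝ)..y, s ^ m * φ₁ s = φ y - φ 0 := by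
    apply intervalIntegral.integral_eq_sub_of_hasDerivAt
    · intro s hs
      have hs' := hsub hs
      rw [← hder s hs']
      exact ((hφ.differentiableOn one_ne_zero s hs').differentiableAt (isOpen_Ioo.mem_nhds hs')).hasDerivAt
    · exact ((continuous_pow m).continuousOn.mul (hφ₁.mono hsub)).intervalIntegrable
  rw [← hint]
  rcases eq_or_ne y 0 with rfl | hy0
  · simp
  · have hcv := intervalIntegral.integral_comp_mul_right (f := fun s => s ^ m * φ₁ s)
      (a := 0) (b := 1) hy0
    simp only [zero_mul, one_mul, smul_eq_mul] at hcv
    have h2 : ∫ t in (0:ℝ)..1, (t * y) ^ m * φ₁ (t * y)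
        = y ^ m * ∫ t in (0:ℝ)..1, t ^ m * φ₁ (t * y) := by
      rw [← intervalIntegral.integral_const_mul]
      congr 1; ext t; ring
    rw [h2] at hcv
    rw [pow_succ, mul_comm (y ^ m) y, mul_assoc, hcv, ← mul_assoc, mul_inv_cancel₀ hy0, one_mul]

/-- Normal form for a phase whose derivative vanishes at `0` to exact order `m`:
if `φ` is smooth on an open interval `I = (c,d) ∋ 0` with `φ'(y) = y^m φ₁(y)`,
`φ₁` smooth and `φ₁(0) ≠ 0`, then on a neighborhood `J ⊆ I` of `0` there is a smooth
function `ψ` with `ψ(0) = 0`, `ψ'(0) = (|φ₁(0)|/(m+1))^{1/(m+1)} > 0`, and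
`φ(y) = φ(0) + sgn(φ₁(0)) ψ(y)^{m+1}` on `J`. -/
theorem phase_normal_form (c d : ℝ) (h0 : (0 : ℝ) ∈ Set.Ioo c d) (m : ℕ)
    (φ φ₁ : ℝ → ℝ)
    (hφ : ContDiffOn ℝ (⊤ : ℕ∞) φ (Set.Ioo c d))
    (hφ₁ : ContDiffOn ℝ (⊤ : ℕ∞) φ₁ (Set.Ioo c d))
    (hder : ∀ y ∈ Set.Ioo c d, deriv φ y = y ^ m * φ₁ y)
    (hφ₁0 : φ₁ 0 ≠ 0) :
    ∃ J : Set ℝ, IsOpen J ∧ J ⊆ Set.Ioo c d ∧ (0 : ℝ) ∈ J ∧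
      ∃ ψ : ℝ → ℝ, ContDiffOn ℝ (⊤ : ℕ∞) ψ J ∧ ψ 0 = 0 ∧
        deriv ψ 0 = (|φ₁ 0| / ((m : ℝ) + 1)) ^ ((1 : ℝ) / ((m : ℝ) + 1)) ∧
        0 < deriv ψ 0 ∧
        ∀ y ∈ J, φ y = φ 0 + Real.sign (φ₁ 0) * ψ y ^ (m + 1) := by
  have hIopen : IsOpen (Set.Ioo c d) := isOpen_Ioo
  have hInhds : Set.Ioo c d ∈ 𝓝 (0:ℝ) := hIopen.mem_nhds h0
  -- smooth factorization
  set F : ℝ → ℝ := fun y => φ y - φ 0 with hFdef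
  set g : ℝ → ℝ := fun y => ∫ t in (0:ℝ)..1, t ^ m * φ₁ (t * y) with hgdef
  have hgs : ContDiffOn ℝ (⊤ : ℕ∞) g (Set.Ioo c d) :=
    contDiffOn_infty.mpr fun n => aux_param_contDiffOn h0 n m φ₁ hφ₁
  have hg_cont : ContinuousAt g 0 := hgs.continuousOn.continuousAt hInhds
  have hg_diff0 : DifferentiableAt ℝ g 0 :=
    (hgs.contDiffAt hInhds).differentiableAt (by simp)
  have hFeq : ∀ᶠ y in 𝓝 (0:ℝ), F y = y ^ (m+1) * g y := by
    filter_upwards [hInhds] with y hy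
    exact aux_factor h0 m φ φ₁ (hφ.of_le (by exact_mod_cast le_top)) hφ₁.continuousOn hder hy
  have hgev : ∀ᶠ y in 𝓝 (0:ℝ), ContDiffAt ℝ (⊤ : ℕ∞) g y := by
    filter_upwards [hInhds] with y hy
    exact hgs.contDiffAt (isOpen_Ioo.mem_nhds hy)
  have hg0 : g 0 = φ₁ 0 / ((m:ℝ) + 1) := by
    simp only [hgdef, mul_zero]
    rw [intervalIntegral.integral_mul_const, integral_pow]
    simp
    ring
  set s₀ := Real.sign (φ₁ 0) with hs₀def
  have hm1pos : (0:ℝ) < (m:ℝ) + 1 := by positivity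
  have hs₀ : s₀ * φ₁ 0 = |φ₁ 0| := by
    rcases hφ₁0.lt_or_gt with h' | h'
    · rw [hs₀def, Real.sign_of_neg h', abs_of_neg h']; ring
    · rw [hs₀def, Real.sign_of_pos h', abs_of_pos h']; ring
  have hs₀sq : s₀ * s₀ = 1 := by
    rcases Real.sign_apply_eq_of_ne_zero _ hφ₁0 with h' | h' <;>
      rw [hs₀def, h'] <;> norm_num
  have hsg0 : s₀ * g 0 = |φ₁ 0| / ((m:ℝ) + 1) := by
    rw [hg0, ← mul_div_assoc, hs₀]
  have hsg0pos : 0 < s₀ * g 0 := by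
    rw [hsg0]; exact div_pos (abs_pos.mpr hφ₁0) hm1pos
  -- choose the neighborhood J
  have hEvent : ∀ᶠ y in 𝓝 (0:ℝ),
      ContDiffAt ℝ (⊤ : ℕ∞) g y ∧ F y = y ^ (m+1) * g y ∧ 0 < s₀ * g y ∧ y ∈ Set.Ioo c d := by
    have e3 : ∀ᶠ y in 𝓝 (0:ℝ), 0 < s₀ * g y := by
      have hcont : ContinuousAt (fun y => s₀ * g y) 0 := continuousAt_const.mul hg_cont
      filter_upwards [hcont.eventually_mem (isOpen_Ioi.mem_nhds hsg0pos)] with y hy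
      exact hy
    filter_upwards [hgev, hFeq, e3, hInhds] with y a b c' d'
    exact ⟨a, b, c', d'⟩
  obtain ⟨J, hJprop, hJopen, hJ0⟩ := eventually_nhds_iff.mp hEvent
  refine ⟨J, hJopen, fun y hy => (hJprop y hy).2.2.2, hJ0, ?_⟩
  set p : ℝ := (1:ℝ) / ((m:ℝ) + 1) with hpdef
  set ψ : ℝ → ℝ := fun y => y * (s₀ * g y) ^ p with hψdef
  have hψderiv : deriv ψ 0 = (s₀ * g 0) ^ p := by
    have hgd : HasDerivAt (fun z => s₀ * g z) (s₀ * deriv g 0) 0 :=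
      (hg_diff0.hasDerivAt).const_mul s₀
    have houter : HasDerivAt (fun x : ℝ => x ^ p) (p * (s₀ * g 0) ^ (p - 1)) (s₀ * g 0) :=
      Real.hasDerivAt_rpow_const (Or.inl (ne_of_gt hsg0pos))
    have hcomp : HasDerivAt (fun z => (s₀ * g z) ^ p)
        (p * (s₀ * g 0) ^ (p - 1) * (s₀ * deriv g 0)) 0 := by have := houter.comp 0 hgd; exact this
    have hψd : HasDerivAt ψ
        (1 * (s₀ * g 0) ^ p + 0 * (p * (s₀ * g 0) ^ (p - 1) * (s₀ * deriv g 0))) 0 :=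
      (hasDerivAt_id 0).mul hcomp
    rw [hψd.deriv]; ring
  refine ⟨ψ, ?_, by simp [hψdef], ?_, ?_, ?_⟩
  · -- smoothness
    intro y hy
    obtain ⟨hyg, hyF, hypos, hyI⟩ := hJprop y hy
    have h1 : ContDiffAt ℝ (⊤ : ℕ∞) (fun z => s₀ * g z) y := contDiffAt_const.mul hyg
    have h2 : ContDiffAt ℝ (⊤ : ℕ∞) (fun x : ℝ => x ^ p) (s₀ * g y) :=
      Real.contDiffAt_rpow_const_of_ne (ne_of_gt hypos)
    exact (contDiffAt_id.mul (h2.comp y h1)).contDiffWithinAt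
  · rw [hψderiv, hsg0]
  · rw [hψderiv, hsg0]
    exact Real.rpow_pos_of_pos (div_pos (abs_pos.mpr hφ₁0) hm1pos) _
  · intro y hy
    obtain ⟨hyg, hyF, hypos, hyI⟩ := hJprop y hy
    have hpow : ((s₀ * g y) ^ p) ^ (m + 1) = s₀ * g y := by
      rw [← Real.rpow_natCast ((s₀ * g y) ^ p) (m + 1), ← Real.rpow_mul (le_of_lt hypos)]
      have : p * ((m + 1 : ℕ) : ℝ) = 1 := by
        rw [hpdef]; push_cast; field_simp
      rw [this, Real.rpow_one]
    have hkey : s₀ * ψ y ^ (m + 1) = y ^ (m + 1) * g y := by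
      have hψy : ψ y = y * (s₀ * g y) ^ p := rfl
      rw [hψy, mul_pow, hpow]
      calc s₀ * (y ^ (m+1) * (s₀ * g y)) = (s₀ * s₀) * (y ^ (m+1) * g y) := by ring
        _ = y ^ (m+1) * g y := by rw [hs₀sq, one_mul]
    have hFy : F y = φ y - φ 0 := rfl
    rw [hkey, ← hyF, hFy]; ring
end
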